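/- Greedy max-load attack can be Θ(N)-suboptimal: for every N >= 2 there exists a configuration of N lines with loads L_i and capacities C_i > L_i such that (a) there exists a single line whose attack triggers a cascade failing all N lines, but (b) the greedy strategy that repeatedly attacks the alive line with the largest current load (waiting for steady state after each attack) must attack all N lines before the whole system fails, i.e., no cascading failures ever occur under the greedy max-load attack. -/

import Mathlib

open Finset
open scoped Classical

/-- One step of the equal load redistribution cascade: every alive line whose
free space is at most the total failed load divided by the number of alive lines fails. -/
noncomputable def step {N : ℕ} (L S : Fin N → ℝ) (F : Finset (Fin N)) : Finset (Fin N) :=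
  F ∪ Finset.univ.filter (fun i => S i ≤ (∑ j ∈ F, L j) / ((N : ℝ) - F.card))

/-- The steady state (final failed set) of the cascade initiated by attack set `A`. -/
noncomputable def cascade {N : ℕ} (L S : Fin N → ℝ) (A : Finset (Fin N)) : Finset (Fin N) :=
  (step L S)^[N] A

/-!
Take loads `1, N, N - 1, …, 2` on lines `0, 1, …, N - 1` and give line `j ≥ 1` free space
exactly `Q_j / (N - j)`, the extra load per alive line once lines `0, …, j - 1` have failed
(`Q_j` their total load); line `0` gets more free space than the total load. Since
`Q_j / (N - j)` is strictly increasing in `j`, attacking line `0` fails lines `1, 2, …`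
one per round. Greedy attack sets are sets of largest loads, so they avoid line `0`; for an
alive line `j ≥ 1` such a set lies inside `{1, …, j - 1}`, so it has less load than
`{0, …, j - 1}` and no more lines, and the extra load per alive line stays below `Q_j / (N - j)`.
-/

section Cascade

variable {N : ℕ} {L S : Fin N → ℝ} {A F T : Finset (Fin N)}

noncomputable def extraLoad (L : Fin N → ℝ) (F : Finset (Fin N)) : ℝ :=
  (∑ j ∈ F, L j) / ((N : ℝ) - #F)

theorem mem_step {i : Fin N} : i ∈ step L S F ↔ i ∈ F ∨ S i ≤ extraLoad L F := by
  simp [step, extraLoad]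

theorem subset_step : F ⊆ step L S F :=
  fun _ hi => mem_step.2 (.inl hi)

theorem step_univ : step L S univ = univ :=
  univ_subset_iff.1 subset_step

theorem step_eq_self (h : ∀ i ∉ F, extraLoad L F < S i) : step L S F = F := by
  refine subset_antisymm (fun i hi => ?_) subset_step
  by_contra hiF
  exact (h i hiF).not_ge ((mem_step.1 hi).resolve_left hiF)

theorem cascade_eq_self (h : ∀ i ∉ A, extraLoad L A < S i) : cascade L S A = A :=
  Function.iterate_fixed (step_eq_self h) N

theorem extraLoad_empty : extraLoad L ∅ = 0 := by
  simp [extraLoad]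

theorem extraLoad_le_sum (hL : ∀ i, 0 ≤ L i) (hA : #A < N) :
    extraLoad L A ≤ ∑ j ∈ A, L j := by
  have : (1 : ℝ) ≤ N - #A := by
    rw [le_sub_iff_add_le', ← Nat.cast_add_one, Nat.cast_le]; exact hA
  exact div_le_self (sum_nonneg fun i _ => hL i) this

theorem extraLoad_lt_of_ssubset (hL : ∀ i, 0 < L i) (hAT : A ⊂ T) (hT : #T < N) :
    extraLoad L A < extraLoad L T := by
  obtain ⟨i, hiT, hiA⟩ := exists_of_ssubset hAT
  have hsum : ∑ j ∈ A, L j < ∑ j ∈ T, L j :=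
    sum_lt_sum_of_subset hAT.subset hiT hiA (hL i) fun j _ _ => (hL j).le
  have hcard : (#A : ℝ) < #T := by exact_mod_cast card_lt_card hAT
  have hTN : (#T : ℝ) < N := by exact_mod_cast hT
  calc extraLoad L A ≤ (∑ j ∈ A, L j) / ((N : ℝ) - #T) := by
        unfold extraLoad
        gcongr
        exact sum_nonneg fun j _ => (hL j).le
    _ < extraLoad L T := by
        unfold extraLoad
        gcongr

end Cascade

def firstLines (N k : ℕ) : Finset (Fin N) := {i : Fin N | (i : ℕ) < k}

section FirstLines

variable {N k m : ℕ}

@[simp] theorem mem_firstLines {i : Fin N} : i ∈ firstLines N k ↔ (i : ℕ) < k := by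
  simp [firstLines]

theorem card_firstLines (hk : k ≤ N) : #(firstLines N k) = k := by
  rw [firstLines, Fin.card_filter_val_lt, min_eq_right hk]

theorem card_firstLines_lt (i : Fin N) : #(firstLines N i) < N :=
  (card_firstLines i.isLt.le).trans_lt i.isLt

theorem zero_mem_firstLines [NeZero N] {i : Fin N} (hi : i ≠ 0) : 0 ∈ firstLines N i := by
  rw [mem_firstLines, Fin.val_zero, Nat.pos_iff_ne_zero, Fin.val_ne_zero_iff]
  exact hi

theorem firstLines_ssubset (hkm : k < m) (hm : m ≤ N) : firstLines N k ⊂ firstLines N m := by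
  refine ssubset_iff_of_subset (fun i hi => ?_) |>.2 ⟨⟨k, by omega⟩, ?_, ?_⟩
  · exact mem_firstLines.2 ((mem_firstLines.1 hi).trans hkm)
  · exact mem_firstLines.2 hkm
  · exact fun h => lt_irrefl k (mem_firstLines.1 h)

theorem firstLines_of_le (hN : N ≤ k) : firstLines N k = univ :=
  eq_univ_of_forall fun i => mem_firstLines.2 (i.isLt.trans_le hN)

end FirstLines

namespace ChainConfig

variable {N : ℕ} [NeZero N]

noncomputable def load (N : ℕ) [NeZero N] (i : Fin N) : ℝ :=
  if i = 0 then 1 else N + 1 - (i : ℕ)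

noncomputable def free (N : ℕ) [NeZero N] (i : Fin N) : ℝ :=
  if i = 0 then ∑ j, load N j + 1 else extraLoad (load N) (firstLines N i)

theorem load_zero : load N 0 = 1 :=
  if_pos rfl

theorem two_le_load {i : Fin N} (hi : i ≠ 0) : 2 ≤ load N i := by
  have : ((i : ℕ) : ℝ) + 1 ≤ N := by exact_mod_cast i.isLt
  rw [load, if_neg hi]
  linarith

theorem load_pos (i : Fin N) : 0 < load N i := by
  by_cases hi : i = 0
  · rw [hi, load_zero]
    exact one_pos
  · linarith [two_le_load hi]

theorem load_le_load_iff {i j : Fin N} (hj : j ≠ 0) :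
    load N j ≤ load N i ↔ i ≠ 0 ∧ i ≤ j := by
  by_cases hi : i = 0
  · rw [hi, load_zero]
    exact iff_of_false (by linarith [two_le_load hj]) fun h => h.1 rfl
  · rw [load, load, if_neg hi, if_neg hj, sub_le_sub_iff_left, Nat.cast_le]
    exact (and_iff_right hi).symm

theorem free_of_ne_zero {i : Fin N} (hi : i ≠ 0) :
    free N i = extraLoad (load N) (firstLines N i) := if_neg hi

theorem free_pos (i : Fin N) : 0 < free N i := by
  by_cases hi : i = 0
  · rw [free, if_pos hi]
    exact add_pos_of_nonneg_of_pos (sum_nonneg fun j _ => (load_pos j).le) one_pos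
  · rw [free_of_ne_zero hi, ← extraLoad_empty (L := load N)]
    exact extraLoad_lt_of_ssubset load_pos (empty_ssubset.2 ⟨0, zero_mem_firstLines hi⟩)
      (card_firstLines_lt i)

theorem step_firstLines {k : ℕ} (hk : 1 ≤ k) :
    step (load N) (free N) (firstLines N k) = firstLines N (k + 1) := by
  rcases le_or_gt N k with hNk | hkN
  · rw [firstLines_of_le hNk, firstLines_of_le (by omega), step_univ]
  ext i
  rw [mem_step, mem_firstLines, mem_firstLines]
  rcases lt_trichotomy (i : ℕ) k with hlt | rfl | hgt
  · exact iff_of_true (.inl hlt) (by omega)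
  · have hi : i ≠ 0 := Fin.val_ne_zero_iff.1 (by omega)
    exact iff_of_true (.inr (free_of_ne_zero hi).le) (Nat.lt_succ_self _)
  · have hi : i ≠ 0 := Fin.val_ne_zero_iff.1 (by omega)
    have hlt : extraLoad (load N) (firstLines N k) < free N i := by
      rw [free_of_ne_zero hi]
      exact extraLoad_lt_of_ssubset load_pos (firstLines_ssubset hgt i.isLt.le)
        (card_firstLines_lt i)
    exact iff_of_false (not_or.2 ⟨by omega, hlt.not_ge⟩) (by omega)

theorem iterate_step_singleton_zero (m : ℕ) :
    (step (load N) (free N))^[m] {0} = firstLines N (m + 1) := by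
  induction m with
  | zero =>
    ext i
    rw [Function.iterate_zero_apply, mem_singleton, mem_firstLines, Nat.lt_one_iff,
      ← Fin.val_zero N, Fin.val_inj]
  | succ m ih => rw [Function.iterate_succ_apply', ih, step_firstLines (by omega)]

theorem cascade_singleton_zero : cascade (load N) (free N) {0} = univ := by
  rw [cascade, iterate_step_singleton_zero, firstLines_of_le (by omega)]

theorem extraLoad_lt_free {A : Finset (Fin N)} (hA : #A < N)
    (hdom : ∀ i ∈ A, ∀ j ∉ A, load N j ≤ load N i) {j : Fin N} (hj : j ∉ A) :
    extraLoad (load N) A < free N j := by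
  have h0A : (0 : Fin N) ∉ A := fun h0 => by
    have hj0 : j ≠ 0 := fun h => hj (h ▸ h0)
    exact ((load_le_load_iff hj0).1 (hdom 0 h0 j hj)).1 rfl
  by_cases hj0 : j = 0
  · rw [free, if_pos hj0]
    calc extraLoad (load N) A ≤ ∑ i ∈ A, load N i :=
          extraLoad_le_sum (fun i => (load_pos i).le) hA
      _ ≤ ∑ i, load N i := sum_le_univ_sum_of_nonneg fun i => (load_pos i).le
      _ < ∑ i, load N i + 1 := lt_add_one _
  · have hAj : A ⊂ firstLines N j := by
      refine ssubset_iff_of_subset (fun i hi => ?_) |>.2 ⟨0, ?_, h0A⟩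
      · exact mem_firstLines.2 <|
          ((load_le_load_iff hj0).1 (hdom i hi j hj)).2.lt_of_ne (ne_of_mem_of_not_mem hi hj)
      · exact zero_mem_firstLines hj0
    rw [free_of_ne_zero hj0]
    exact extraLoad_lt_of_ssubset load_pos hAj (card_firstLines_lt j)

end ChainConfig

/-- The greedy max-load attack can be `Θ(N)`-suboptimal: for every `N ≥ 2` there is a
configuration where a single well-chosen attack collapses the whole system, yet
attacking lines in decreasing order of (current, equivalently initial) load never
triggers any cascade, so the greedy max-load strategy must attack all `N` lines. -/
theorem greedy_max_load_suboptimal (N : ℕ) (hN : 2 ≤ N) :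
    ∃ L C : Fin N → ℝ,
      (∀ i, 0 < L i) ∧ (∀ i, L i < C i) ∧
      (∃ a : Fin N, cascade L (fun i => C i - L i) {a} = Finset.univ) ∧
      (∀ A : Finset (Fin N), A.card < N →
        (∀ i ∈ A, ∀ j ∉ A, L j ≤ L i) → cascade L (fun i => C i - L i) A = A) := by
  have : NeZero N := ⟨by omega⟩
  refine ⟨ChainConfig.load N, ChainConfig.load N + ChainConfig.free N, ChainConfig.load_pos,
    fun i => lt_add_of_pos_right _ (ChainConfig.free_pos i), ?_⟩
  simp only [Pi.add_apply, add_sub_cancel_left]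
  exact ⟨⟨0, ChainConfig.cascade_singleton_zero⟩,
    fun A hA hdom => cascade_eq_self fun j hj => ChainConfig.extraLoad_lt_free hA hdom hj⟩
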